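/- arXiv:2508.07619 — 2 statements merged into one kernel-verified Lean document; each statement's English description precedes it below -/
import Mathlib

section
/- If a sequence S ∈ {0,1}^∞ has infinitely many prefixes in a set A ⊆ {0,1}* with |A ∩ {0,1}^n| ≤ 2^{αn} for all n, where α < 1, then the martingale d = Σ_n 2^{⌈(1−t)n⌉} d_n (for rational t with α < t < 1, where d_n is the cover martingale for A at length n) t-succeeds on S: d(S↾n) ≥ 2^{(1−t)n} for infinitely many n. -/
/-- The cover martingale for `A` at length `n` (constant beyond level `n`). -/
noncomputable def coverM (A : Set (List Bool)) (n : ℕ) (w : List Bool) : ℝ :=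
  (Set.ncard {x | x ∈ A ∧ x.length = n ∧ w.take n <+: x} : ℝ) / 2 ^ (n - w.length)

/-- The length-`n` prefix of the sequence `S ∈ {0,1}^∞`. -/
def seqPrefix (S : ℕ → Bool) (n : ℕ) : List Bool := List.ofFn fun i : Fin n => S i

lemma coverM_nonneg (A : Set (List Bool)) (k : ℕ) (w : List Bool) : 0 ≤ coverM A k w :=
  div_nonneg (Nat.cast_nonneg _) (by positivity)

lemma coverM_le (A : Set (List Bool)) (α : ℝ)
    (hA : ∀ n : ℕ, (Set.ncard {x | x ∈ A ∧ x.length = n} : ℝ) ≤ (2 : ℝ) ^ (α * n))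
    (k : ℕ) (w : List Bool) :
    coverM A k w ≤ (2 : ℝ) ^ (α * k) / 2 ^ (k - w.length) := by
  refine div_le_div_of_nonneg_right ?_ (by positivity)
  refine le_trans ?_ (hA k)
  have hsub : {x | x ∈ A ∧ x.length = k ∧ w.take k <+: x} ⊆ {x | x ∈ A ∧ x.length = k} :=
    fun x hx => ⟨hx.1, hx.2.1⟩
  have hfin : {x : List Bool | x ∈ A ∧ x.length = k}.Finite :=
    (List.finite_length_eq Bool k).subset (fun x hx => hx.2)
  exact_mod_cast Set.ncard_le_ncard hsub hfin

/-- Entropy-rate/dimension bound: if `|A ∩ {0,1}^n| ≤ 2^(αn)` for all `n` with `α < 1`, and `S`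
has infinitely many prefixes in `A`, then for any rational `t` with `α < t < 1` the martingale
`d = Σ_n 2^⌈(1-t)n⌉ d_n` (`d_n` the cover martingale for `A` at length `n`) `t`-succeeds on
`S`: `d(S↾n) ≥ 2^((1-t)n)` for infinitely many `n`. -/
theorem entropy_rate_t_success (A : Set (List Bool)) (α : ℝ) (hα : α < 1)
    (hA : ∀ n : ℕ, (Set.ncard {x | x ∈ A ∧ x.length = n} : ℝ) ≤ (2 : ℝ) ^ (α * n))
    (S : ℕ → Bool) (hS : {n : ℕ | seqPrefix S n ∈ A}.Infinite)
    (t : ℚ) (hαt : α < (t : ℝ)) (ht1 : (t : ℝ) < 1) :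
    {n : ℕ | (2 : ℝ) ^ ((1 - (t : ℝ)) * n) ≤
        ∑' k : ℕ, (2 : ℝ) ^ (⌈(1 - (t : ℝ)) * k⌉ : ℤ) * coverM A k (seqPrefix S n)}.Infinite := by
  refine hS.mono ?_
  intro n hn
  simp only [Set.mem_setOf_eq] at hn ⊢
  set w : List Bool := seqPrefix S n with hw
  have hwlen : w.length = n := by simp [hw, seqPrefix]
  set f : ℕ → ℝ := fun k => (2 : ℝ) ^ (⌈(1 - (t : ℝ)) * k⌉ : ℤ) * coverM A k w with hf
  have hfnonneg : ∀ k, 0 ≤ f k := fun k =>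
    mul_nonneg (by positivity) (coverM_nonneg A k w)
  -- bound each term by a geometric series
  have hbound : ∀ k, f k ≤ (2 : ℝ) ^ (n + 2 : ℝ) * ((2 : ℝ) ^ (α - t)) ^ k := by
    intro k
    have h1 : (2 : ℝ) ^ (⌈(1 - (t : ℝ)) * k⌉ : ℤ) ≤ (2 : ℝ) ^ ((1 - (t : ℝ)) * k + 1) := by
      rw [← Real.rpow_intCast]
      apply Real.rpow_le_rpow_of_exponent_le one_le_two
      have := Int.ceil_lt_add_one ((1 - (t : ℝ)) * k)
      push_cast
      linarith [Int.ceil_lt_add_one ((1 - (t : ℝ)) * k)]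
    have h2 : coverM A k w ≤ (2 : ℝ) ^ (α * k) * (2 : ℝ) ^ ((n : ℝ) - k) := by
      refine le_trans (coverM_le A α hA k w) ?_
      rw [div_le_iff₀ (by positivity), mul_assoc]
      nth_rewrite 1 [← mul_one ((2:ℝ) ^ (α * k))]
      refine mul_le_mul_of_nonneg_left ?_ (by positivity)
      rw [hwlen]
      rcases le_or_gt n k with h | h
      · rw [← Real.rpow_natCast (2:ℝ) (k - n), ← Real.rpow_add (by norm_num)]
        rw [show ((n : ℝ) - k + (k - n : ℕ)) = 0 by push_cast [Nat.cast_sub h]; ring]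
        simp
      · rw [Nat.sub_eq_zero_of_le h.le]
        simp only [pow_zero, mul_one]
        have hk : (k : ℝ) ≤ n := by exact_mod_cast h.le
        have := Real.rpow_le_rpow_of_exponent_le (one_le_two (α := ℝ))
          (show (0:ℝ) ≤ (n : ℝ) - k by linarith)
        simpa using this
    calc f k ≤ (2 : ℝ) ^ ((1 - (t : ℝ)) * k + 1) * ((2 : ℝ) ^ (α * k) * (2 : ℝ) ^ ((n : ℝ) - k)) :=
          mul_le_mul h1 h2 (coverM_nonneg A k w) (by positivity)
      _ = (2 : ℝ) ^ ((1 - (t : ℝ)) * k + 1 + (α * k + ((n : ℝ) - k))) := by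
          rw [← Real.rpow_add (by norm_num : (0:ℝ) < 2), ← Real.rpow_add (by norm_num : (0:ℝ) < 2)]
      _ ≤ (2 : ℝ) ^ ((n + 2 : ℝ) + (α - t) * k) := by
          apply Real.rpow_le_rpow_of_exponent_le one_le_two
          ring_nf
          linarith
      _ = (2 : ℝ) ^ (n + 2 : ℝ) * ((2 : ℝ) ^ (α - t)) ^ k := by
          rw [Real.rpow_add (by norm_num : (0:ℝ) < 2), ← Real.rpow_natCast ((2:ℝ) ^ (α - t)) k,
            ← Real.rpow_mul (by norm_num)]
  have hr : (2 : ℝ) ^ (α - (t:ℝ)) < 1 := by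
    exact Real.rpow_lt_one_of_one_lt_of_neg one_lt_two (by linarith)
  have hsum : Summable f := by
    refine Summable.of_nonneg_of_le hfnonneg hbound ?_
    exact (summable_geometric_of_lt_one (by positivity) hr).mul_left _
  -- the tsum is at least the term at k = n
  have hterm : (2 : ℝ) ^ ((1 - (t : ℝ)) * n) ≤ f n := by
    have hmem : w ∈ {x | x ∈ A ∧ x.length = n ∧ w.take n <+: x} :=
      show w ∈ A ∧ w.length = n ∧ w.take n <+: w from ⟨hn, hwlen, List.take_prefix n w⟩
    have hfin : {x : List Bool | x ∈ A ∧ x.length = n ∧ w.take n <+: x}.Finite :=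
      ((List.finite_length_eq Bool n).subset (fun x hx => hx.2.1))
    have hpos : 0 < Set.ncard {x | x ∈ A ∧ x.length = n ∧ w.take n <+: x} :=
      (Set.ncard_pos hfin).mpr ⟨w, hmem⟩
    have hc1 : (1 : ℝ) ≤ coverM A n w := by
      unfold coverM
      rw [hwlen, Nat.sub_self, pow_zero, div_one]
      exact_mod_cast hpos
    have h1 : (2 : ℝ) ^ ((1 - (t : ℝ)) * n) ≤ (2 : ℝ) ^ (⌈(1 - (t : ℝ)) * n⌉ : ℤ) := by
      rw [← Real.rpow_intCast]
      exact Real.rpow_le_rpow_of_exponent_le one_le_two (Int.le_ceil _)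
    calc (2 : ℝ) ^ ((1 - (t : ℝ)) * n) ≤ (2 : ℝ) ^ (⌈(1 - (t : ℝ)) * n⌉ : ℤ) := h1
      _ ≤ f n := le_mul_of_one_le_right (by positivity) hc1
  exact hterm.trans (Summable.le_tsum hsum n fun k _ => hfnonneg k)
end

section
/- For every n ≥ 1 and s ≥ n, the number of Boolean functions f : {0,1}^n → {0,1} computable by circuits of size at most s is at most (48·e·s)^s. -/
/-!
If a function is computed by a circuit with `t` gates, two of which compute the same function,
then it is computed by a smaller circuit: delete the later of the two and redirect its uses to
the earlier one (or, if it is the output, cut the circuit after the earlier one). So every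
function computable with at most `s` gates is computed by an irredundant circuit with `t ≤ s`
gates, all computing different functions.

Such a circuit is recorded, for each permutation `σ` of its gates, by the list of its gates in the
order given by `σ`, each as one of 16 operations on an unordered pair of the `n + t` wires,
together with the position of the output. The gate values are the unique fixed point of this
unordered description, so it determines the function; since the gates compute different
functions, it also determines `σ`. Hence each of the `t!` relabellings gives a different code,
and the number of such functions is at most `t · (8 (n + t) (n + t + 1)) ^ t / t!`. Summing over
`t ≤ s` and using Stirling's bound `t! ≥ √(2πt) (t/e)^t` gives `(48 e s)^s`.
-/

/-- A Boolean circuit with `n` inputs and `s` binary gates: gate `g` applies an arbitrary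
binary Boolean operation to two earlier wires (the `n` inputs or gates `0, …, g-1`). -/
structure Circuit (n s : ℕ) where
  op : Fin s → Bool → Bool → Bool
  in1 : (g : Fin s) → Fin (n + g.val)
  in2 : (g : Fin s) → Fin (n + g.val)

/-- The list of values of the first `k` gates of `C` on input `x`. -/
def Circuit.valList {n s : ℕ} (C : Circuit n s) (x : Fin n → Bool) : ℕ → List Bool
  | 0 => []
  | k + 1 =>
    Circuit.valList C x k ++
      [if h : k < s then
          C.op ⟨k, h⟩
            (if h' : (C.in1 ⟨k, h⟩).val < n then x ⟨(C.in1 ⟨k, h⟩).val, h'⟩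
             else (Circuit.valList C x k).getD ((C.in1 ⟨k, h⟩).val - n) false)
            (if h' : (C.in2 ⟨k, h⟩).val < n then x ⟨(C.in2 ⟨k, h⟩).val, h'⟩
             else (Circuit.valList C x k).getD ((C.in2 ⟨k, h⟩).val - n) false)
        else false]

/-- The Boolean function computed by `C`: the value of its last gate. -/
def Circuit.compute {n s : ℕ} (C : Circuit n s) (x : Fin n → Bool) : Bool :=
  (C.valList x s).getD (s - 1) false

open Finset Nat Real

lemma Fin.val_succAbove {m : ℕ} (p : Fin (m + 1)) (i : Fin m) :
    (p.succAbove i : ℕ) = if (i : ℕ) < p then (i : ℕ) else i + 1 := by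
  unfold Fin.succAbove
  split_ifs <;> simp_all [Fin.lt_def]

namespace Circuit

variable {n s : ℕ}

def wireVal (x : Fin n → Bool) (F : Fin s → Bool) {g : Fin s} (w : Fin (n + g)) : Bool :=
  if h : (w : ℕ) < n then x ⟨w, h⟩ else F ⟨w - n, by have := w.isLt; have := g.isLt; omega⟩

def IsEvaluation (C : Circuit n s) (x : Fin n → Bool) (F : Fin s → Bool) : Prop :=
  ∀ g, F g = C.op g (wireVal x F (C.in1 g)) (wireVal x F (C.in2 g))

def val (C : Circuit n s) (x : Fin n → Bool) (g : Fin s) : Bool :=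
  (C.valList x (g + 1)).getD g false

lemma length_valList (C : Circuit n s) (x : Fin n → Bool) (k : ℕ) :
    (C.valList x k).length = k := by
  induction k with
  | zero => rfl
  | succ k ih => simp [valList, ih]

lemma getD_valList (C : Circuit n s) (x : Fin n → Bool) {j k : ℕ} (hjk : j < k) :
    (C.valList x k).getD j false = (C.valList x (j + 1)).getD j false := by
  induction k with
  | zero => omega
  | succ k ih =>
    rcases Nat.lt_succ_iff_lt_or_eq.mp hjk with hj | rfl
    · rw [valList, List.getD_append _ _ _ _ (by rwa [length_valList]), ih hj]
    · rfl

lemma wireVal_congr {x : Fin n → Bool} {F F' : Fin s → Bool} {g : Fin s}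
    (h : ∀ j < g, F j = F' j) (w : Fin (n + g)) : wireVal x F w = wireVal x F' w := by
  unfold wireVal
  split_ifs
  · rfl
  · exact h _ (by rw [Fin.lt_def]; have := w.isLt; dsimp only; omega)

lemma wireVal_val (C : Circuit n s) (x : Fin n → Bool) {g : ℕ} (hg : g < s) (w : Fin (n + g)) :
    wireVal x (C.val x) (g := ⟨g, hg⟩) w =
      if h : (w : ℕ) < n then x ⟨w, h⟩ else (C.valList x g).getD (w - n) false := by
  unfold wireVal
  split_ifs
  · rfl
  · exact (getD_valList C x (by have := w.isLt; dsimp only at *; omega)).symm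

lemma isEvaluation_val (C : Circuit n s) (x : Fin n → Bool) : C.IsEvaluation x (C.val x) := by
  rintro ⟨g, hg⟩
  show (C.valList x g ++ [_]).getD g false = _
  rw [List.getD_append_right _ _ _ _ (by rw [length_valList]), length_valList, Nat.sub_self,
    List.getD_cons_zero, dif_pos hg, wireVal_val, wireVal_val]

lemma IsEvaluation.eq_val {C : Circuit n s} {x : Fin n → Bool} {F : Fin s → Bool}
    (hF : C.IsEvaluation x F) : F = C.val x := by
  funext g
  induction g using WellFoundedLT.induction with
  | _ g ih => rw [hF g, C.isEvaluation_val x g, wireVal_congr ih, wireVal_congr ih]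

lemma compute_eq_val_last {m : ℕ} (C : Circuit n (m + 1)) (x : Fin n → Bool) :
    C.compute x = C.val x (Fin.last m) :=
  rfl

def trunc (C : Circuit n s) {k : ℕ} (hk : k ≤ s) : Circuit n k where
  op g := C.op (g.castLE hk)
  in1 g := C.in1 (g.castLE hk)
  in2 g := C.in2 (g.castLE hk)

lemma val_trunc (C : Circuit n s) {k : ℕ} (hk : k ≤ s) (x : Fin n → Bool) :
    (C.trunc hk).val x = C.val x ∘ Fin.castLE hk :=
  (IsEvaluation.eq_val fun g => C.isEvaluation_val x (g.castLE hk)).symm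

-- Wires after deleting gate `h`: uses of `h` are redirected to `g`, later gates move down by one.
def deleteWire {m : ℕ} {g h : Fin (m + 1)} (hgh : g < h) {k : Fin m}
    (w : Fin (n + h.succAbove k)) : Fin (n + k) :=
  ⟨if (w : ℕ) < n + h then w else if (w : ℕ) = n + h then n + g else w - 1, by
    have := w.isLt
    have : (g : ℕ) < h := hgh
    have := Fin.val_succAbove h k
    split_ifs at * <;> omega⟩

def delete {m : ℕ} (C : Circuit n (m + 1)) {g h : Fin (m + 1)} (hgh : g < h) : Circuit n m where
  op k := C.op (h.succAbove k)
  in1 k := deleteWire hgh (C.in1 (h.succAbove k))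
  in2 k := deleteWire hgh (C.in2 (h.succAbove k))

lemma wireVal_deleteWire {m : ℕ} (C : Circuit n (m + 1)) {g h : Fin (m + 1)} (hgh : g < h)
    {x : Fin n → Bool} (hx : C.val x g = C.val x h) {k : Fin m}
    (w : Fin (n + h.succAbove k)) :
    wireVal x (C.val x ∘ h.succAbove) (deleteWire hgh w) = wireVal x (C.val x) w := by
  have hg : (g : ℕ) < h := hgh
  have hsucc : ∀ {i : Fin m} {j : Fin (m + 1)}, (if (i : ℕ) < h then (i : ℕ) else i + 1) = j →
      C.val x (h.succAbove i) = C.val x j := fun e =>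
    congrArg _ (Fin.ext ((Fin.val_succAbove h _).trans e))
  unfold wireVal deleteWire
  dsimp only
  split_ifs <;> (try rfl) <;> (try omega) <;> simp only [Function.comp_apply]
  · exact hsucc (by dsimp only; rw [if_pos (by omega)])
  · rw [dif_neg (by omega), hsucc (j := g) (by dsimp only; rw [if_pos (by omega)]; omega), hx]
    exact congrArg _ (Fin.ext (by dsimp only; omega))
  · rw [dif_neg (by omega)]
    exact hsucc (by dsimp only; rw [if_neg (by omega)]; omega)

lemma val_delete {m : ℕ} (C : Circuit n (m + 1)) {g h : Fin (m + 1)} (hgh : g < h)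
    {x : Fin n → Bool} (hx : C.val x g = C.val x h) :
    (C.delete hgh).val x = C.val x ∘ h.succAbove := by
  refine (IsEvaluation.eq_val fun k => ?_).symm
  rw [Function.comp_apply, C.isEvaluation_val x (h.succAbove k)]
  exact congrArg₂ _ (wireVal_deleteWire C hgh hx _).symm (wireVal_deleteWire C hgh hx _).symm

def Irredundant (C : Circuit n s) : Prop :=
  Function.Injective fun g x => C.val x g

lemma exists_smaller_of_val_eq {m : ℕ} (C : Circuit n (m + 1)) {g h : Fin (m + 1)} (hgh : g < h)
    (heq : ∀ x, C.val x g = C.val x h) :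
    ∃ k < m, ∃ D : Circuit n (k + 1), D.compute = C.compute := by
  by_cases hlast : h = Fin.last m
  · refine ⟨g, by omega, C.trunc g.isLt, funext fun x => ?_⟩
    rw [compute_eq_val_last, compute_eq_val_last, val_trunc, Function.comp_apply, ← hlast, ← heq]
    rfl
  · obtain ⟨m, rfl⟩ : ∃ m', m = m' + 1 := ⟨m - 1, by omega⟩
    refine ⟨m, m.lt_succ_self, C.delete hgh, funext fun x => ?_⟩
    rw [compute_eq_val_last, compute_eq_val_last, val_delete C hgh (heq x), Function.comp_apply,
      Fin.succAbove_ne_last_last hlast]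

lemma exists_irredundant (m : ℕ) (C : Circuit n (m + 1)) :
    ∃ k ≤ m, ∃ D : Circuit n (k + 1), D.compute = C.compute ∧ D.Irredundant := by
  induction m using Nat.strong_induction_on with
  | _ m ih =>
    by_cases hC : C.Irredundant
    · exact ⟨m, le_rfl, C, rfl, hC⟩
    obtain ⟨g, h, hgh, hne⟩ : ∃ g h, (fun x => C.val x g) = (fun x => C.val x h) ∧ g ≠ h := by
      simpa [Irredundant, Function.Injective] using hC
    obtain ⟨k, hk, D, hD⟩ : ∃ k < m, ∃ D : Circuit n (k + 1), D.compute = C.compute := by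
      rcases hne.lt_or_gt with hlt | hlt
      · exact exists_smaller_of_val_eq C hlt (congrFun hgh)
      · exact exists_smaller_of_val_eq C hlt fun x => (congrFun hgh x).symm
    obtain ⟨k', hk', E, hE, hirr⟩ := ih k hk D
    exact ⟨k', by omega, E, hE.trans hD, hirr⟩

abbrev Gate (m : ℕ) := (Bool → Bool → Bool) × {p : Fin m × Fin m // p.1 ≤ p.2}

namespace Gate

variable {m : ℕ}

def eval (γ : Gate m) (V : Fin m → Bool) : Bool :=
  γ.1 (V γ.2.1.1) (V γ.2.1.2)

def ofWires (o : Bool → Bool → Bool) (a b : Fin m) : Gate m :=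
  if hab : a ≤ b then (o, ⟨(a, b), hab⟩) else (fun u v => o v u, ⟨(b, a), le_of_not_ge hab⟩)

lemma eval_ofWires (o : Bool → Bool → Bool) (a b : Fin m) (V : Fin m → Bool) :
    (ofWires o a b).eval V = o (V a) (V b) := by
  unfold ofWires
  split <;> rfl

lemma card_le (m : ℕ) : Fintype.card (Gate m) ≤ 8 * (m * (m + 1)) := by
  have hpairs : Fintype.card {p : Fin m × Fin m // p.1 ≤ p.2} = (m + 1).choose 2 := by
    rw [← Fintype.card_congr Sym2.sortEquiv, Sym2.card, Fintype.card_fin]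
  rw [Fintype.card_prod, hpairs, Nat.choose_two_right]
  simp only [Fintype.card_fun, Fintype.card_bool, add_tsub_cancel_right, mul_comm (m + 1) m]
  omega

end Gate

def relabel {t : ℕ} (σ : Equiv.Perm (Fin t)) {g : Fin t} (w : Fin (n + g)) : Fin (n + t) :=
  if h : (w : ℕ) < n then Fin.castAdd t ⟨w, h⟩
  else Fin.natAdd n (σ ⟨w - n, by have := w.isLt; have := g.isLt; omega⟩)

lemma append_relabel {t : ℕ} (x : Fin n → Bool) (G : Fin t → Bool) (σ : Equiv.Perm (Fin t))
    {g : Fin t} (w : Fin (n + g)) : Fin.append x G (relabel σ w) = wireVal x (G ∘ σ) w := by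
  unfold relabel wireVal
  split_ifs
  · exact Fin.append_left x G _
  · exact Fin.append_right x G _

-- Forgets the order of the gates: gate `g` of `C` sits at position `σ g`.
def encode {t : ℕ} (σ : Equiv.Perm (Fin t)) (C : Circuit n t) (j : Fin t) : Gate (n + t) :=
  Gate.ofWires (C.op (σ.symm j)) (relabel σ (C.in1 (σ.symm j))) (relabel σ (C.in2 (σ.symm j)))

lemma isEvaluation_comp_iff {t : ℕ} (C : Circuit n t) (σ : Equiv.Perm (Fin t))
    (x : Fin n → Bool) (G : Fin t → Bool) :
    C.IsEvaluation x (G ∘ σ) ↔ ∀ j, G j = (encode σ C j).eval (Fin.append x G) := by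
  rw [← σ.forall_congr_right]
  refine forall_congr' fun g => ?_
  rw [encode, σ.symm_apply_apply, Gate.eval_ofWires, append_relabel, append_relabel]
  rfl

lemma val_comp_symm_eq_of_encode_eq {t : ℕ} {C C' : Circuit n t} {σ σ' : Equiv.Perm (Fin t)}
    (h : encode σ C = encode σ' C') (x : Fin n → Bool) :
    C.val x ∘ σ.symm = C'.val x ∘ σ'.symm := by
  have hC' : C'.IsEvaluation x ((C'.val x ∘ σ'.symm) ∘ σ') := by
    simpa [Function.comp_assoc] using C'.isEvaluation_val x
  rw [isEvaluation_comp_iff, ← h, ← isEvaluation_comp_iff] at hC'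
  rw [← hC'.eq_val, Function.comp_assoc, Equiv.self_comp_symm, Function.comp_id]

def irredundantFunctions (n t : ℕ) : Set ((Fin n → Bool) → Bool) :=
  {f | ∃ C : Circuit n t, C.compute = f ∧ C.Irredundant}

lemma ncard_irredundantFunctions_mul_factorial_le (m : ℕ) :
    (irredundantFunctions n (m + 1)).ncard * (m + 1)! ≤
      Fintype.card (Gate (n + (m + 1))) ^ (m + 1) * (m + 1) := by
  choose C hC hirr using fun f : irredundantFunctions n (m + 1) => f.2
  let Ψ (p : irredundantFunctions n (m + 1) × Equiv.Perm (Fin (m + 1))) :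
      (Fin (m + 1) → Gate (n + (m + 1))) × Fin (m + 1) :=
    (encode p.2 (C p.1), p.2 (Fin.last m))
  have hΨ : Function.Injective Ψ := by
    rintro ⟨f, σ⟩ ⟨f', σ'⟩ hΨ
    obtain ⟨hgates, hout⟩ :
        encode σ (C f) = encode σ' (C f') ∧ σ (Fin.last m) = σ' (Fin.last m) :=
      Prod.ext_iff.mp hΨ
    have hval x := val_comp_symm_eq_of_encode_eq hgates x
    obtain rfl : f = f' := by
      refine Subtype.ext (funext fun x => ?_)
      have := congrFun (hval x) (σ (Fin.last m))
      rw [Function.comp_apply, Function.comp_apply, Equiv.symm_apply_apply, hout,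
        Equiv.symm_apply_apply] at this
      rw [← hC f, ← hC f', compute_eq_val_last, compute_eq_val_last, this]
    obtain rfl : σ = σ' := by
      refine Equiv.symm_bijective.injective (Equiv.ext fun j => ?_)
      exact hirr f (funext fun x => congrFun (hval x) j)
    rfl
  simpa [Nat.card_eq_fintype_card, Fintype.card_perm] using Nat.card_le_card_of_injective Ψ hΨ

lemma exists_mem_irredundantFunctions (hn : 1 ≤ n) {s' : ℕ} (C : Circuit n s') :
    ∃ m < max s' 1, C.compute ∈ irredundantFunctions n (m + 1) := by
  rcases s' with _ | k
  · refine ⟨0, Nat.one_pos, ⟨fun _ _ _ => false, fun _ => ⟨0, by omega⟩, fun _ => ⟨0, by omega⟩⟩,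
      rfl, fun a b _ => Fin.ext (by omega)⟩
  · obtain ⟨m, hm, D, hD, hirr⟩ := exists_irredundant k C
    exact ⟨m, by omega, D, hD, hirr⟩

lemma ncard_irredundantFunctions_le {m : ℕ} (hn : n ≤ s) (hm : m < s) :
    ((irredundantFunctions n (m + 1)).ncard : ℝ) ≤ (16 * s * (2 * s + 1) : ℝ) ^ (m + 1) / m ! := by
  have hgate : Fintype.card (Gate (n + (m + 1))) ≤ 16 * s * (2 * s + 1) :=
    (Gate.card_le _).trans <| by
      have : n + (m + 1) ≤ 2 * s := by omega
      nlinarith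
  have hcount :
      (irredundantFunctions n (m + 1)).ncard * m ! ≤ (16 * s * (2 * s + 1)) ^ (m + 1) := by
    have := ncard_irredundantFunctions_mul_factorial_le (n := n) m
    rw [factorial_succ, mul_left_comm, mul_comm _ (m + 1)] at this
    exact (Nat.le_of_mul_le_mul_left this m.succ_pos).trans (Nat.pow_le_pow_left hgate _)
  rw [le_div_iff₀ (by positivity)]
  exact_mod_cast hcount

end Circuit

lemma sum_range_pow_succ_div_factorial_le {A : ℝ} {s : ℕ} (hA : 2 * s ≤ A) :
    ∑ m ∈ range s, A ^ (m + 1) / m ! ≤ 2 * s * A ^ s / s ! := by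
  induction s with
  | zero => simp
  | succ s ih =>
    push_cast at hA
    have hA0 : 0 ≤ A := by linarith [s.cast_nonneg (α := ℝ)]
    rw [sum_range_succ]
    calc ∑ m ∈ range s, A ^ (m + 1) / m ! + A ^ (s + 1) / s !
        ≤ 2 * s * A ^ s / s ! + A ^ (s + 1) / s ! := by gcongr; exact ih (by linarith)
      _ ≤ A ^ (s + 1) / s ! + A ^ (s + 1) / s ! := by
        gcongr
        rw [pow_succ, mul_comm _ A]
        gcongr
        linarith
      _ = 2 * ↑(s + 1) * A ^ (s + 1) / (s + 1)! := by
        rw [factorial_succ]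
        push_cast
        field_simp
        ring

lemma two_mul_mul_four_pow_le_nine_pow (s : ℕ) : 2 * s * 4 ^ s ≤ 9 ^ s := by
  rcases s.eq_zero_or_pos with rfl | hs
  · simp
  induction s, hs using Nat.le_induction with
  | base => norm_num
  | succ s hs ih =>
    calc 2 * (s + 1) * 4 ^ (s + 1) ≤ 2 * (2 * s) * 4 ^ (s + 1) := by gcongr; omega
      _ = 8 * (2 * s * 4 ^ s) := by ring
      _ ≤ 9 * 9 ^ s := by gcongr; omega
      _ = 9 ^ (s + 1) := by ring

lemma two_mul_mul_pow_le_sqrt_mul_pow (s : ℕ) (hs : 1 ≤ s) :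
    2 * s * (2 * s + 1 : ℝ) ^ s ≤ √(2 * π * s) * (3 * s) ^ s := by
  have hs0 : (0 : ℝ) < s := by exact_mod_cast hs
  have hexp : ((2 * s + 1 : ℝ) ^ 2) ^ s ≤ exp 1 * (4 * s ^ 2) ^ s := by
    calc ((2 * s + 1 : ℝ) ^ 2) ^ s = (1 + ((2 * s : ℕ) : ℝ)⁻¹) ^ (2 * s) * (4 * s ^ 2) ^ s := by
          rw [pow_mul, ← mul_pow]
          congr 1
          push_cast
          field_simp
          ring
      _ ≤ exp 1 * (4 * s ^ 2) ^ s := by gcongr; exact one_add_inv_pow_le_exp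
  have hnine : (2 * s * 4 ^ s : ℝ) ≤ 9 ^ s := by exact_mod_cast two_mul_mul_four_pow_le_nine_pow s
  have he : exp 1 ≤ π := by linarith [exp_one_lt_d9, pi_gt_three]
  rw [← pow_le_pow_iff_left₀ (by positivity) (by positivity) two_ne_zero]
  calc (2 * s * (2 * s + 1 : ℝ) ^ s) ^ 2 = 4 * s ^ 2 * ((2 * s + 1 : ℝ) ^ 2) ^ s := by
        rw [mul_pow, pow_right_comm]
        ring
    _ ≤ 4 * s ^ 2 * (exp 1 * (4 * s ^ 2) ^ s) := by gcongr
    _ = 2 * exp 1 * s * (2 * s * 4 ^ s) * (s ^ 2) ^ s := by rw [mul_pow]; ring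
    _ ≤ 2 * π * s * 9 ^ s * (s ^ 2) ^ s := by gcongr
    _ = (√(2 * π * s) * (3 * s) ^ s) ^ 2 := by
      rw [mul_pow, sq_sqrt (by positivity), pow_right_comm ((3 : ℝ) * s), mul_pow (3 : ℝ),
        mul_pow ((3 : ℝ) ^ 2)]
      norm_num
      ring

lemma two_mul_pow_div_factorial_le (s : ℕ) (hs : 1 ≤ s) :
    2 * s * (16 * s * (2 * s + 1) : ℝ) ^ s / s ! ≤ (48 * exp 1 * s) ^ s := by
  rw [div_le_iff₀ (by positivity)]
  calc 2 * s * (16 * s * (2 * s + 1) : ℝ) ^ s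
      = (16 * s) ^ s * (2 * s * (2 * s + 1 : ℝ) ^ s) := by rw [mul_pow]; ring
    _ ≤ (16 * s) ^ s * (√(2 * π * s) * (3 * s) ^ s) :=
      mul_le_mul_of_nonneg_left (two_mul_mul_pow_le_sqrt_mul_pow s hs) (by positivity)
    _ = √(2 * π * s) * (16 * s * (3 * s)) ^ s := by rw [mul_pow (16 * (s : ℝ))]; ring
    _ = √(2 * π * s) * (48 * exp 1 * s * (s / exp 1)) ^ s := by
      congr 2
      field_simp
      ring
    _ = (48 * exp 1 * s) ^ s * (√(2 * π * s) * (s / exp 1) ^ s) := by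
      rw [mul_pow (48 * exp 1 * (s : ℝ))]
      ring
    _ ≤ (48 * exp 1 * s) ^ s * s ! := by gcongr; exact Stirling.le_factorial_stirling s

/-- Lutz's counting bound: for `n ≥ 1` and `s ≥ n`, the number of Boolean functions on
`n` input bits computable by circuits with at most `s` gates is at most `(48·e·s)^s`. -/
theorem count_circuit_functions (n s : ℕ) (hn : 1 ≤ n) (hs : n ≤ s) :
    (Set.ncard {f : (Fin n → Bool) → Bool |
        ∃ s' ≤ s, ∃ C : Circuit n s', ∀ x, C.compute x = f x} : ℝ) ≤
      (48 * Real.exp 1 * s) ^ s := by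
  calc _ ≤ ∑ m ∈ range s, ((Circuit.irredundantFunctions n (m + 1)).ncard : ℝ) := by
        norm_cast
        refine (Set.ncard_le_ncard ?_ (Set.toFinite _)).trans (set_ncard_biUnion_le _ _)
        rintro f ⟨s', hs', C, hC⟩
        obtain ⟨m, hm, hf⟩ := C.exists_mem_irredundantFunctions hn
        rw [funext hC] at hf
        exact Set.mem_biUnion (mem_range.2 (by omega)) hf
    _ ≤ ∑ m ∈ range s, (16 * s * (2 * s + 1) : ℝ) ^ (m + 1) / m ! :=
        sum_le_sum fun m hm => Circuit.ncard_irredundantFunctions_le hs (mem_range.1 hm)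
    _ ≤ 2 * s * (16 * s * (2 * s + 1) : ℝ) ^ s / s ! :=
        sum_range_pow_succ_div_factorial_le (by nlinarith)
    _ ≤ (48 * exp 1 * s) ^ s := two_mul_pow_div_factorial_le s (hn.trans hs)
end
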